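/- Let G and H be connected weighted graphs on the same vertex set of size n, with Laplacians L_G and L_H, let ε ∈ (0,1), and suppose (1−ε)·L_G ⪯ L_H ⪯ (1+ε)·L_G. Then (n−1)/(1+ε) ≤ st_H(G) ≤ (n−1)/(1−ε), where st_H(G) = Tr(L_H⁺ L_G). Consequently, the rescaled graph H' with Laplacian L_{H'} = (1+ε)^{−1}·L_H satisfies n − 1 ≤ st_{H'}(G) ≤ (1+ε)/(1−ε) · (n−1). -/

import Mathlib

/-!
Multiplying the Loewner sandwich `(1 - ε) L_G ⪯ L_H ⪯ (1 + ε) L_G` by the positive semidefinite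
matrix `L_H⁺` and taking traces gives `(1 - ε) st_H(G) ≤ Tr(L_H⁺ L_H) ≤ (1 + ε) st_H(G)`. The middle
term is `n - 1`: `1 - L_H⁺ L_H` is an idempotent whose range is `ker L_H`, the line of constant
vectors, so its trace is `1`. Rescaling `L_H` by `(1 + ε)⁻¹` rescales `L_H⁺` by `1 + ε`.
-/

open Matrix

/-- The four Penrose conditions characterizing the Moore–Penrose pseudoinverse `P` of a real
matrix `A`. -/
def IsMoorePenrose {ι : Type*} [Fintype ι] (A P : Matrix ι ι ℝ) : Prop :=
  A * P * A = A ∧ P * A * P = P ∧ (A * P)ᵀ = A * P ∧ (P * A)ᵀ = P * A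

/-- The Laplacian of a connected weighted graph: symmetric, nonpositive off-diagonal entries,
zero row sums, and kernel spanned by the all-ones vector. -/
def IsConnLaplacian {ι : Type*} [Fintype ι] (M : Matrix ι ι ℝ) : Prop :=
  M.IsSymm ∧ (∀ i j, i ≠ j → M i j ≤ 0) ∧ (∀ i, ∑ j, M i j = 0) ∧
    ∀ x : ι → ℝ, M.mulVec x = 0 ↔ ∃ c : ℝ, x = fun _ => c

open scoped ComplexOrder in
theorem Matrix.PosSemidef.trace_mul_nonneg {ι 𝕜 : Type*} [Fintype ι] [RCLike 𝕜]
    {X Y : Matrix ι ι 𝕜} (hX : X.PosSemidef) (hY : Y.PosSemidef) : 0 ≤ (X * Y).trace := by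
  classical
  obtain ⟨B, rfl⟩ : ∃ B : Matrix ι ι 𝕜, X = star B * B := by
    open scoped MatrixOrder in exact CStarAlgebra.nonneg_iff_eq_star_mul_self.mp hX.nonneg
  rw [Matrix.mul_assoc, Matrix.trace_mul_comm]
  exact (hY.mul_mul_conjTranspose_same B).trace_nonneg

open scoped ComplexOrder in
theorem Matrix.PosSemidef.trace_mul_le_trace_mul {ι 𝕜 : Type*} [Fintype ι] [RCLike 𝕜]
    {P A B : Matrix ι ι 𝕜} (hP : P.PosSemidef) (hAB : (B - A).PosSemidef) :
    (P * A).trace ≤ (P * B).trace := by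
  have h := hP.trace_mul_nonneg hAB
  rwa [Matrix.mul_sub, trace_sub, sub_nonneg] at h

theorem Matrix.PosSemidef.of_sub_smul_of_smul_sub {ι : Type*} [Fintype ι] {L M : Matrix ι ι ℝ}
    {a b : ℝ} (hab : a < b) (ha : (M - a • L).PosSemidef) (hb : (b • L - M).PosSemidef) :
    L.PosSemidef := by
  have h := (ha.add hb).smul (inv_nonneg.2 (sub_nonneg.2 hab.le))
  rwa [show M - a • L + (b • L - M) = (b - a) • L by module, smul_smul,
    inv_mul_cancel₀ (sub_ne_zero.2 hab.ne'), one_smul] at h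

namespace IsMoorePenrose

variable {ι : Type*} [Fintype ι] {A P Q : Matrix ι ι ℝ}

theorem unique (hP : IsMoorePenrose A P) (hQ : IsMoorePenrose A Q) : P = Q := by
  obtain ⟨hP1, hP2, hP3, hP4⟩ := hP
  obtain ⟨hQ1, hQ2, hQ3, hQ4⟩ := hQ
  have hAP : A * P = A * Q :=
    calc A * P = (A * Q * A * P)ᵀ := by rw [hQ1, hP3]
    _ = (A * P)ᵀ * (A * Q)ᵀ := by rw [← transpose_mul, Matrix.mul_assoc (A * Q)]
    _ = A * P * A * Q := by rw [hP3, hQ3]; simp only [Matrix.mul_assoc]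
    _ = A * Q := by rw [hP1]
  have hPA : P * A = Q * A :=
    calc P * A = (P * (A * Q * A))ᵀ := by rw [hQ1, hP4]
    _ = (Q * A)ᵀ * (P * A)ᵀ := by rw [← transpose_mul]; simp only [Matrix.mul_assoc]
    _ = Q * (A * P * A) := by rw [hQ4, hP4]; simp only [Matrix.mul_assoc]
    _ = Q * A := by rw [hP1]
  calc P = P * (A * P) := by rw [← Matrix.mul_assoc, hP2]
  _ = Q * A * Q := by rw [hAP, ← Matrix.mul_assoc, hPA]
  _ = Q := hQ2

theorem transpose (hP : IsMoorePenrose A P) : IsMoorePenrose Aᵀ Pᵀ := by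
  obtain ⟨h1, h2, h3, h4⟩ := hP
  refine ⟨?_, ?_, ?_, ?_⟩
  · rw [← transpose_mul, ← transpose_mul, ← Matrix.mul_assoc, h1]
  · rw [← transpose_mul, ← transpose_mul, ← Matrix.mul_assoc, h2]
  · rw [← transpose_mul, h4, h4]
  · rw [← transpose_mul, h3, h3]

theorem transpose_eq_self (hA : Aᵀ = A) (hP : IsMoorePenrose A P) : Pᵀ = P :=
  (hA ▸ hP.transpose).unique hP

theorem inv_smul {c : ℝ} (hc : c ≠ 0) (hP : IsMoorePenrose A P) :
    IsMoorePenrose (c⁻¹ • A) (c • P) := by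
  obtain ⟨h1, h2, h3, h4⟩ := hP
  refine ⟨?_, ?_, ?_, ?_⟩
  · simp [smul_smul, hc, h1]
  · simp [smul_smul, hc, h2]
  · simp [smul_smul, h3]
  · simp [smul_smul, h4]

theorem posSemidef (hA : A.PosSemidef) (hP : IsMoorePenrose A P) : P.PosSemidef := by
  have h := hA.mul_mul_conjTranspose_same P
  rwa [conjTranspose_eq_transpose_of_trivial, hP.transpose_eq_self hA.isHermitian, hP.2.1] at h

variable [DecidableEq ι]

theorem isIdempotentElem_toLin'_one_sub_mul (hP : IsMoorePenrose A P) :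
    IsIdempotentElem (1 - P * A).toLin' := by
  have h : IsIdempotentElem (1 - P * A) :=
    IsIdempotentElem.one_sub <| by rw [IsIdempotentElem, ← Matrix.mul_assoc, hP.2.1]
  exact h.map Matrix.toLinAlgEquiv'

theorem ker_toLin'_mul (hP : IsMoorePenrose A P) :
    LinearMap.ker (P * A).toLin' = LinearMap.ker A.toLin' := by
  refine le_antisymm ?_ ?_
  · calc LinearMap.ker (P * A).toLin' ≤ LinearMap.ker (A * (P * A)).toLin' := by
          rw [Matrix.toLin'_mul A]; exact LinearMap.ker_le_ker_comp _ _
    _ = LinearMap.ker A.toLin' := by rw [← Matrix.mul_assoc, hP.1]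
  · rw [Matrix.toLin'_mul]; exact LinearMap.ker_le_ker_comp _ _

theorem range_toLin'_one_sub_mul (hP : IsMoorePenrose A P) :
    LinearMap.range (1 - P * A).toLin' = LinearMap.ker A.toLin' := by
  have h := LinearMap.IsIdempotentElem.range_eq_ker_one_sub hP.isIdempotentElem_toLin'_one_sub_mul
  rw [map_sub, Matrix.toLin'_one, ← Module.End.one_eq_id] at h ⊢
  rwa [sub_sub_cancel, hP.ker_toLin'_mul] at h

theorem trace_one_sub_mul (hP : IsMoorePenrose A P) :
    (1 - P * A).trace = Module.finrank ℝ (LinearMap.ker A.toLin') := by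
  rw [← Matrix.trace_toLin'_eq, ← hP.range_toLin'_one_sub_mul]
  exact (LinearMap.IsIdempotentElem.isProj_range _ hP.isIdempotentElem_toLin'_one_sub_mul).trace

theorem trace_mul_eq_card_sub_finrank_ker (hP : IsMoorePenrose A P) :
    (P * A).trace = Fintype.card ι - Module.finrank ℝ (LinearMap.ker A.toLin') := by
  rw [← hP.trace_one_sub_mul, trace_sub, trace_one]
  ring

end IsMoorePenrose

theorem IsConnLaplacian.ker_toLin' {ι : Type*} [Fintype ι] [DecidableEq ι] {L : Matrix ι ι ℝ}
    (hL : IsConnLaplacian L) : LinearMap.ker L.toLin' = ℝ ∙ (1 : ι → ℝ) := by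
  ext x
  rw [LinearMap.mem_ker, Matrix.toLin'_apply, hL.2.2.2 x, Submodule.mem_span_singleton]
  simp only [eq_comm (a := x), funext_iff, Pi.smul_apply, Pi.one_apply, smul_eq_mul, mul_one]

theorem IsConnLaplacian.finrank_ker_toLin' {ι : Type*} [Fintype ι] [DecidableEq ι] [Nonempty ι]
    {L : Matrix ι ι ℝ} (hL : IsConnLaplacian L) : Module.finrank ℝ (LinearMap.ker L.toLin') = 1 := by
  rw [hL.ker_toLin']
  exact finrank_span_singleton one_ne_zero

theorem IsMoorePenrose.trace_mul_of_isConnLaplacian {ι : Type*} [Fintype ι] [DecidableEq ι]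
    [Nonempty ι] {L P : Matrix ι ι ℝ} (hL : IsConnLaplacian L) (hP : IsMoorePenrose L P) :
    (P * L).trace = Fintype.card ι - 1 := by
  rw [hP.trace_mul_eq_card_sub_finrank_ker, hL.finrank_ker_toLin', Nat.cast_one]

theorem IsMoorePenrose.trace_mul_mem_Icc {ι : Type*} [Fintype ι] [DecidableEq ι] [Nonempty ι]
    {LG LH PH : Matrix ι ι ℝ} {a b : ℝ} (ha : 0 < a) (hab : a < b) (hH : IsConnLaplacian LH)
    (hPH : IsMoorePenrose LH PH) (h1 : (LH - a • LG).PosSemidef)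
    (h2 : (b • LG - LH).PosSemidef) :
    (PH * LG).trace ∈ Set.Icc ((Fintype.card ι - 1) / b) ((Fintype.card ι - 1) / a) := by
  have hLG : LG.PosSemidef := .of_sub_smul_of_smul_sub hab h1 h2
  have hLH : LH.PosSemidef := by simpa using h1.add (hLG.smul ha.le)
  have hPH_psd : PH.PosSemidef := hPH.posSemidef hLH
  have htr : (PH * LH).trace = Fintype.card ι - 1 := hPH.trace_mul_of_isConnLaplacian hH
  have hlow := hPH_psd.trace_mul_le_trace_mul h2
  have hupp := hPH_psd.trace_mul_le_trace_mul h1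
  rw [htr, Matrix.mul_smul, trace_smul, smul_eq_mul] at hlow hupp
  exact ⟨(div_le_iff₀' (ha.trans hab)).2 hlow, (le_div_iff₀' ha).2 hupp⟩

theorem sparsifier_stretch_bounds_general
    {n : ℕ} (hn : 0 < n) (LG LH PH PH' : Matrix (Fin n) (Fin n) ℝ)
    (hH : IsConnLaplacian LH)
    (ε : ℝ) (hε : ε ∈ Set.Ioo (0 : ℝ) 1)
    (h1 : (LH - (1 - ε) • LG).PosSemidef)
    (h2 : ((1 + ε) • LG - LH).PosSemidef)
    (hPH : IsMoorePenrose LH PH)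
    (hPH' : IsMoorePenrose ((1 + ε)⁻¹ • LH) PH') :
    (((n : ℝ) - 1) / (1 + ε) ≤ (PH * LG).trace ∧
      (PH * LG).trace ≤ ((n : ℝ) - 1) / (1 - ε)) ∧
    ((n : ℝ) - 1 ≤ (PH' * LG).trace ∧
      (PH' * LG).trace ≤ (1 + ε) / (1 - ε) * ((n : ℝ) - 1)) := by
  obtain ⟨hε0, hε1⟩ := hε
  have : Nonempty (Fin n) := ⟨⟨0, hn⟩⟩
  have hstretch := hPH.trace_mul_mem_Icc (sub_pos.2 hε1) (by linarith) hH h1 h2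
  rw [Fintype.card_fin] at hstretch
  obtain ⟨lower, upper⟩ := hstretch
  have hPH'_eq : PH' = (1 + ε) • PH := hPH'.unique (hPH.inv_smul (by linarith))
  have hscaled : (PH' * LG).trace = (1 + ε) * (PH * LG).trace := by
    rw [hPH'_eq, Matrix.smul_mul, trace_smul, smul_eq_mul]
  refine ⟨⟨lower, upper⟩, ?_, ?_⟩ <;> rw [hscaled]
  · exact (div_le_iff₀' (by linarith)).1 lower
  · calc (1 + ε) * (PH * LG).trace ≤ (1 + ε) * (((n : ℝ) - 1) / (1 - ε)) := by gcongr
    _ = (1 + ε) / (1 - ε) * ((n : ℝ) - 1) := by ring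

/-- if `(1-ε) L_G ⪯ L_H ⪯ (1+ε) L_G` then
`(n-1)/(1+ε) ≤ st_H(G) ≤ (n-1)/(1-ε)`, and the rescaled graph `H'` with
`L_{H'} = (1+ε)⁻¹ L_H` satisfies `n-1 ≤ st_{H'}(G) ≤ (1+ε)/(1-ε) (n-1)`. -/
theorem sparsifier_stretch_bounds
    {n : ℕ} (hn : 0 < n) (LG LH PH PH' : Matrix (Fin n) (Fin n) ℝ)
    (hG : IsConnLaplacian LG) (hH : IsConnLaplacian LH)
    (ε : ℝ) (hε : ε ∈ Set.Ioo (0 : ℝ) 1)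
    (h1 : (LH - (1 - ε) • LG).PosSemidef)
    (h2 : ((1 + ε) • LG - LH).PosSemidef)
    (hPH : IsMoorePenrose LH PH)
    (hPH' : IsMoorePenrose ((1 + ε)⁻¹ • LH) PH') :
    (((n : ℝ) - 1) / (1 + ε) ≤ (PH * LG).trace ∧
      (PH * LG).trace ≤ ((n : ℝ) - 1) / (1 - ε)) ∧
    ((n : ℝ) - 1 ≤ (PH' * LG).trace ∧
      (PH' * LG).trace ≤ (1 + ε) / (1 - ε) * ((n : ℝ) - 1)) :=
  sparsifier_stretch_bounds_general hn LG LH PH PH' hH ε hε h1 h2 hPH hPH'
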